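/- Let d : ℝ → ℝ be an additive function such that the mapping φ defined on (−1, 1) by φ(x) = d(arccos(x)) + (1/√(1 − x²))·d(x) is regular on (−1, 1) (i.e., locally bounded, or continuous, or Lebesgue measurable). Then there exists a real derivation χ : ℝ → ℝ such that d(x) = χ(x) + d(1)·x for all x ∈ ℝ. -/

import Mathlib

/-!
Put `B(u, v) = d(uv) - u d(v) - v d(u)`; it is symmetric and biadditive, and `d` is a derivation
plus `d(1) x` exactly when `B(u, v) = B(1, 1) u v`. With `ρ(x) = √(1 - x²) φ(x)` one has
`ρ(cos r) = sin r · d(r) + d(cos r)` on `(0, π)`, and the product-to-sum formula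
`2 cos t cos s = cos (t + s) + cos (t - s)` makes the `d(t)`, `d(s)` terms cancel in
`B(cos t, cos s)`, which becomes an explicit expression in `ρ` alone. Hence each slice
`u ↦ B(u, v)` is an additive function that is locally bounded or measurable on an interval,
so it is linear (Steinhaus), and symmetry and biadditivity propagate this to all of `B`.
-/

open Real Set

/-- A function `φ` is locally bounded on a set `s` if every point of `s` has a
neighborhood (within `s`) on which `φ` is bounded. -/
def LocallyBoundedOn (φ : ℝ → ℝ) (s : Set ℝ) : Prop :=
  ∀ x ∈ s, ∃ C : ℝ, ∀ᶠ y in nhdsWithin x s, |φ y| ≤ C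

/-- A real-valued function is *regular* on its domain `s` if it is locally bounded,
or continuous, or Lebesgue measurable on `s`. -/
def RegularOn (φ : ℝ → ℝ) (s : Set ℝ) : Prop :=
  LocallyBoundedOn φ s ∨ ContinuousOn φ s ∨ Measurable (s.restrict φ)

/-- A real derivation: an additive function satisfying the Leibniz rule. -/
def IsRealDerivation (χ : ℝ → ℝ) : Prop :=
  (∀ x y : ℝ, χ (x + y) = χ x + χ y) ∧ (∀ x y : ℝ, χ (x * y) = x * χ y + y * χ x)

open MeasureTheory Filter Topology Asymptotics Bornology

section Additive

variable {f : ℝ → ℝ}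

theorem additive_eq_mul_of_isBounded_image (hf : ∀ x y, f (x + y) = f x + f y) {S : Set ℝ}
    (hS : MeasurableSet S) (hS0 : volume S ≠ 0) (hbdd : IsBounded (f '' S)) (x : ℝ) :
    f x = x * f 1 := by
  let F : ℝ →+ ℝ := AddMonoidHom.mk' f hf
  have hcont : Continuous F := by
    refine F.continuous_of_isBounded_nhds_zero
      (Measure.sub_mem_nhds_zero_of_addHaar_pos volume S hS (pos_iff_ne_zero.2 hS0)) ?_
    rw [Set.image_sub]
    exact hbdd.sub hbdd
  simpa [F] using map_real_smul F hcont x 1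

theorem additive_eq_mul_of_isBigO (hf : ∀ x y, f (x + y) = f x + f y) {x₀ : ℝ}
    (hbdd : f =O[𝓝 x₀] fun _ => (1 : ℝ)) (x : ℝ) : f x = x * f 1 := by
  obtain ⟨C, hC⟩ := (isBigO_one_iff ℝ).1 hbdd
  obtain ⟨ε, hε, hball⟩ := Metric.mem_nhds_iff.1 (eventually_map.1 hC)
  refine additive_eq_mul_of_isBounded_image hf (S := Metric.ball x₀ ε) measurableSet_ball ?_ ?_ x
  · simp [Real.volume_ball, hε]
  · refine (Metric.isBounded_closedBall (x := 0) (r := C)).subset ?_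
    rintro _ ⟨y, hy, rfl⟩
    simpa using hball hy

theorem additive_eq_mul_of_eqOn_measurable (hf : ∀ x y, f (x + y) = f x + f y) {S : Set ℝ}
    (hS : MeasurableSet S) (hS0 : volume S ≠ 0) {g : ℝ → ℝ} (hg : Measurable g)
    (hfg : EqOn f g S) (x : ℝ) : f x = x * f 1 := by
  obtain ⟨n, hn⟩ : ∃ n : ℕ, volume (S ∩ g ⁻¹' Metric.ball 0 n) ≠ 0 := by
    by_contra! h
    simp_rw [← measure_iUnion_null_iff, ← inter_iUnion, ← preimage_iUnion,
      Metric.iUnion_ball_nat, preimage_univ, inter_univ] at h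
    exact hS0 h
  refine additive_eq_mul_of_isBounded_image hf (hS.inter (hg measurableSet_ball)) hn ?_ x
  refine (Metric.isBounded_ball (x := 0) (r := n)).subset ?_
  rintro _ ⟨y, ⟨hyS, hyg⟩, rfl⟩
  rwa [hfg hyS]

theorem additive_eq_zero_of_eqOn_zero (hf : ∀ x y, f (x + y) = f x + f y) {S : Set ℝ}
    (hS : MeasurableSet S) (hS0 : volume S ≠ 0) (hzero : EqOn f 0 S) (x : ℝ) : f x = 0 := by
  have hlin := additive_eq_mul_of_eqOn_measurable hf hS hS0 measurable_const hzero
  obtain ⟨y, hyS, hy0⟩ : ∃ y ∈ S, y ≠ 0 := by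
    by_contra! h
    exact hS0 (measure_mono_null h (measure_singleton 0))
  have h1 : f 1 = 0 := by
    simpa [hy0, hzero hyS] using (hlin y).symm
  rw [hlin x, h1, mul_zero]

end Additive

theorem eq_mul_mul_of_symmetric_of_eq_mul {B : ℝ → ℝ → ℝ}
    (hadd : ∀ u₁ u₂ v, B (u₁ + u₂) v = B u₁ v + B u₂ v) (hsymm : ∀ u v, B u v = B v u)
    {S : Set ℝ} (hS : MeasurableSet S) (hS0 : volume S ≠ 0)
    (hslice : ∀ v ∈ S, ∀ u, B u v = u * B 1 v) (u v : ℝ) : B u v = u * v * B 1 1 := by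
  have hadd₂ : ∀ u v₁ v₂, B u (v₁ + v₂) = B u v₁ + B u v₂ := fun u v₁ v₂ => by
    rw [hsymm, hadd, hsymm v₁, hsymm v₂]
  have hlin : ∀ u w, B u w = u * B 1 w := by
    intro u w
    have := additive_eq_zero_of_eqOn_zero (f := fun w => B u w - u * B 1 w)
      (fun w₁ w₂ => by simp only [hadd₂]; ring) hS hS0
      (fun w hw => by simp [hslice w hw u]) w
    linarith
  calc B u v = u * B v 1 := by rw [hlin, hsymm]
    _ = u * v * B 1 1 := by rw [hlin v 1]; ring

theorem LocallyBoundedOn.isBigO_one {φ : ℝ → ℝ} {s : Set ℝ} (hφ : LocallyBoundedOn φ s)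
    (hs : IsOpen s) {x : ℝ} (hx : x ∈ s) : φ =O[𝓝 x] fun _ => (1 : ℝ) := by
  obtain ⟨C, hC⟩ := hφ x hx
  rw [hs.nhdsWithin_eq hx] at hC
  exact IsBigO.of_bound C (by simpa using hC)

theorem cos_mem_Ioo {r : ℝ} (hr : r ∈ Ioo 0 π) : cos r ∈ Ioo (-1) 1 :=
  ⟨by simpa using cos_lt_cos_of_nonneg_of_le_pi hr.1.le le_rfl hr.2,
    by simpa using cos_lt_cos_of_nonneg_of_le_pi le_rfl hr.2.le hr.1⟩

theorem arccos_pos_lt_arccos_and_add_lt_pi {u v : ℝ} (hv : v < 1) (hu : u ∈ Ioo (-v) v) :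
    0 < arccos v ∧ arccos v < arccos u ∧ arccos u + arccos v < π := by
  have hu₁ : -1 ≤ u := by linarith [hu.1]
  have hv₁ : -1 ≤ v := by linarith [hu.1, hu.2]
  refine ⟨arccos_pos.2 hv, strictAntiOn_arccos ⟨hu₁, by linarith [hu.2]⟩ ⟨hv₁, hv.le⟩ hu.2, ?_⟩
  have := strictAntiOn_arccos ⟨neg_le_neg hv.le, by linarith [hu.1]⟩ ⟨hu₁, by linarith [hu.2]⟩ hu.1
  rw [arccos_neg] at this
  linarith

def leibnizDefect (d : ℝ → ℝ) (u v : ℝ) : ℝ := d (u * v) - u * d v - v * d u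

-- `ρ` plays the role of `√(1 - x²) φ(x)` on `(-1, 1)`; it is left free outside that interval so
-- that a measurable extension of `φ` can be used.
noncomputable def defectFormula (ρ : ℝ → ℝ) (u v : ℝ) : ℝ :=
  (ρ (cos (arccos u + arccos v)) + ρ (cos (arccos u - arccos v))) / 2 - u * ρ v - v * ρ u

noncomputable def arccosTransform (d : ℝ → ℝ) (x : ℝ) : ℝ :=
  d (arccos x) + 1 / √(1 - x ^ 2) * d x

section Defect

variable {d ρ : ℝ → ℝ}

theorem leibnizDefect_add_left (hd : ∀ x y, d (x + y) = d x + d y) (u₁ u₂ v : ℝ) :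
    leibnizDefect d (u₁ + u₂) v = leibnizDefect d u₁ v + leibnizDefect d u₂ v := by
  simp only [leibnizDefect, add_mul, hd]
  ring

theorem leibnizDefect_comm (u v : ℝ) : leibnizDefect d u v = leibnizDefect d v u := by
  simp only [leibnizDefect, mul_comm u v]
  ring

theorem sqrt_mul_arccosTransform {x : ℝ} (hx : x ∈ Ioo (-1) 1) :
    √(1 - x ^ 2) * arccosTransform d x = √(1 - x ^ 2) * d (arccos x) + d x := by
  have : 0 < √(1 - x ^ 2) := sqrt_pos.2 (by nlinarith [hx.1, hx.2])
  rw [arccosTransform]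
  field_simp

theorem apply_cos_eq (hρ : ∀ x ∈ Ioo (-1) 1, ρ x = √(1 - x ^ 2) * d (arccos x) + d x) {r : ℝ}
    (hr : r ∈ Ioo 0 π) : ρ (cos r) = sin r * d r + d (cos r) := by
  rw [hρ _ (cos_mem_Ioo hr), arccos_cos hr.1.le hr.2.le,
    ← sin_eq_sqrt_one_sub_cos_sq hr.1.le hr.2.le]

theorem leibnizDefect_cos_cos (hd : ∀ x y, d (x + y) = d x + d y)
    (hρ : ∀ x ∈ Ioo (-1) 1, ρ x = √(1 - x ^ 2) * d (arccos x) + d x) {t s : ℝ}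
    (hs : 0 < s) (hst : s < t) (hts : t + s < π) :
    leibnizDefect d (cos t) (cos s) = (ρ (cos (t + s)) + ρ (cos (t - s))) / 2
      - cos t * ρ (cos s) - cos s * ρ (cos t) := by
  have hsub : d (t - s) = d t - d s := by rw [eq_sub_iff_add_eq, ← hd, sub_add_cancel]
  have hprod : d (cos (t + s)) + d (cos (t - s)) = 2 * d (cos t * cos s) := by
    rw [← hd, two_mul, ← hd, cos_add, cos_sub]
    congr 1
    ring
  rw [leibnizDefect, apply_cos_eq hρ ⟨by linarith, hts⟩,
    apply_cos_eq hρ ⟨by linarith, by linarith⟩, apply_cos_eq hρ ⟨hs, by linarith⟩,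
    apply_cos_eq hρ ⟨by linarith, by linarith⟩, hd, hsub, sin_add, sin_sub]
  linear_combination -hprod / 2

theorem leibnizDefect_eq_defectFormula (hd : ∀ x y, d (x + y) = d x + d y)
    (hρ : ∀ x ∈ Ioo (-1) 1, ρ x = √(1 - x ^ 2) * d (arccos x) + d x) {u v : ℝ} (hv : v < 1)
    (hu : u ∈ Ioo (-v) v) : leibnizDefect d u v = defectFormula ρ u v := by
  obtain ⟨hv₀, hvu, hsum⟩ := arccos_pos_lt_arccos_and_add_lt_pi hv hu
  have key := leibnizDefect_cos_cos hd hρ hv₀ hvu hsum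
  rwa [cos_arccos (by linarith [hu.1]) (by linarith [hu.2]),
    cos_arccos (by linarith [hu.1, hu.2]) hv.le] at key

theorem measurable_defectFormula (hρ : Measurable ρ) (v : ℝ) :
    Measurable fun u => defectFormula ρ u v := by
  unfold defectFormula
  fun_prop

theorem defectFormula_isBigO (hρ : ∀ x ∈ Ioo (-1) 1, ρ =O[𝓝 x] fun _ => (1 : ℝ)) {u₀ v : ℝ}
    (hv : v < 1) (hu₀ : u₀ ∈ Ioo (-v) v) :
    (fun u => defectFormula ρ u v) =O[𝓝 u₀] fun _ => (1 : ℝ) := by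
  obtain ⟨hv₀, hvu, hsum⟩ := arccos_pos_lt_arccos_and_add_lt_pi hv hu₀
  have hcomp : ∀ g : ℝ → ℝ, Continuous g → g u₀ ∈ Ioo (-1) 1 →
      (fun u => ρ (g u)) =O[𝓝 u₀] fun _ => (1 : ℝ) :=
    fun g hg hmem => (hρ _ hmem).comp_tendsto (hg.tendsto u₀)
  have hplus := hcomp (fun u => cos (arccos u + arccos v)) (by fun_prop)
    (cos_mem_Ioo ⟨by linarith [arccos_nonneg u₀], hsum⟩)
  have hminus := hcomp (fun u => cos (arccos u - arccos v)) (by fun_prop)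
    (cos_mem_Ioo ⟨by linarith, by linarith [arccos_le_pi u₀]⟩)
  have hlinear : (fun u => u * ρ v) =O[𝓝 u₀] fun _ => (1 : ℝ) :=
    ((continuous_id.mul continuous_const).tendsto u₀).isBigO_one ℝ
  have hlast := (hρ u₀ ⟨by linarith [hu₀.1], by linarith [hu₀.2]⟩).const_mul_left v
  refine ((((hplus.add hminus).const_mul_left (1 / 2)).sub hlinear).sub hlast).congr_left
    fun u => ?_
  simp only [defectFormula]
  ring

theorem leibnizDefect_eq_mul_of_measurable (hd : ∀ x y, d (x + y) = d x + d y)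
    (hφ : Measurable ((Ioo (-1) 1).domRestrict (arccosTransform d))) (v : ℝ)
    (hv : v ∈ Ioo 0 1) (u : ℝ) : leibnizDefect d u v = u * leibnizDefect d 1 v := by
  obtain ⟨φ, hφm, hφeq⟩ :=
    (MeasurableEmbedding.subtype_coe measurableSet_Ioo).exists_measurable_extend hφ fun _ => ⟨0⟩
  have hρ (x : ℝ) (hx : x ∈ Ioo (-1) 1) :
      √(1 - x ^ 2) * φ x = √(1 - x ^ 2) * d (arccos x) + d x := by
    rw [← sqrt_mul_arccosTransform hx,
      show φ x = arccosTransform d x from congrFun hφeq ⟨x, hx⟩]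
  refine additive_eq_mul_of_eqOn_measurable (f := fun u => leibnizDefect d u v)
    (fun u₁ u₂ => leibnizDefect_add_left hd u₁ u₂ v) measurableSet_Ioo ?_
    (measurable_defectFormula (by fun_prop) v)
    (fun u hu => leibnizDefect_eq_defectFormula hd hρ hv.2 hu) u
  simp [volume_Ioo, hv.1]

theorem leibnizDefect_eq_mul_of_locallyBoundedOn (hd : ∀ x y, d (x + y) = d x + d y)
    (hφ : LocallyBoundedOn (arccosTransform d) (Ioo (-1) 1)) (v : ℝ) (hv : v ∈ Ioo 0 1)
    (u : ℝ) : leibnizDefect d u v = u * leibnizDefect d 1 v := by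
  have hbdd (x : ℝ) (hx : x ∈ Ioo (-1) 1) :
      (fun y => √(1 - y ^ 2) * arccosTransform d y) =O[𝓝 x] fun _ => (1 : ℝ) := by
    simpa using ((Continuous.tendsto (by fun_prop) x).isBigO_one ℝ).mul
      (hφ.isBigO_one isOpen_Ioo hx)
  have hnhds : Ioo (-v) v ∈ 𝓝 0 := Ioo_mem_nhds (by linarith [hv.1]) hv.1
  refine additive_eq_mul_of_isBigO (f := fun u => leibnizDefect d u v)
    (fun u₁ u₂ => leibnizDefect_add_left hd u₁ u₂ v)
    ((defectFormula_isBigO hbdd hv.2 (mem_of_mem_nhds hnhds)).congr' ?_ EventuallyEq.rfl) u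
  filter_upwards [hnhds] with u hu
  exact (leibnizDefect_eq_defectFormula hd (fun _ => sqrt_mul_arccosTransform) hv.2 hu).symm

end Defect

theorem stmt_8 (d : ℝ → ℝ)
    (hd : ∀ x y : ℝ, d (x + y) = d x + d y)
    (hreg : RegularOn
      (fun x : ℝ => d (Real.arccos x) + (1 / Real.sqrt (1 - x ^ 2)) * d x)
      (Set.Ioo (-1) 1)) :
    ∃ χ : ℝ → ℝ, IsRealDerivation χ ∧ ∀ x : ℝ, d x = χ x + d 1 * x := by
  have hslice : ∀ v ∈ Ioo (0 : ℝ) 1, ∀ u, leibnizDefect d u v = u * leibnizDefect d 1 v := by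
    rcases hreg with hbdd | hcont | hmeas
    · exact leibnizDefect_eq_mul_of_locallyBoundedOn hd hbdd
    · exact leibnizDefect_eq_mul_of_measurable hd hcont.domRestrict.measurable
    · exact leibnizDefect_eq_mul_of_measurable hd hmeas
  have hB := eq_mul_mul_of_symmetric_of_eq_mul (leibnizDefect_add_left hd) leibnizDefect_comm
    measurableSet_Ioo (by simp [volume_Ioo]) hslice
  refine ⟨fun x => d x - d 1 * x, ⟨fun x y => ?_, fun x y => ?_⟩, fun x => by ring⟩
  · simp only [hd]
    ring
  · have := hB x y
    simp only [leibnizDefect, mul_one] at this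
    linear_combination this
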